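/- arXiv:1505.07363 — 4 statements merged into one kernel-verified Lean document; each statement's English description precedes it below -/
import Mathlib

section
/- If C and Ĉ are self-dual linear codes in F_q^n, then there exists a matrix A ∈ O_n(F_q) (i.e., AAᵀ = I_n) such that CA = Ĉ. In other words, the orthogonal group acts transitively on the set of self-dual codes of length n over F_q. -/
open Matrix BigOperators

/-- The dual of a block code under the standard dot product. -/
def dualSet {n : ℕ} {F : Type*} [Field F] (C : Submodule F (Fin n → F)) : Set (Fin n → F) :=
  {y | ∀ x ∈ C, x ⬝ᵥ y = 0}

open Module Submodule

section Aux
variable {n : ℕ} {F : Type*} [Field F]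

/-- Dot product as a bilinear map. -/
noncomputable def dotB (F : Type*) [Field F] (n : ℕ) :
    (Fin n → F) →ₗ[F] (Fin n → F) →ₗ[F] F :=
  LinearMap.mk₂ F (fun x y => x ⬝ᵥ y)
    (fun _ _ _ => add_dotProduct _ _ _)
    (fun _ _ _ => smul_dotProduct _ _ _)
    (fun _ _ _ => dotProduct_add _ _ _)
    (fun _ _ _ => dotProduct_smul _ _ _)

@[simp] lemma dotB_apply (x y : Fin n → F) : dotB F n x y = x ⬝ᵥ y := rfl

lemma mem_dualSet {C : Submodule F (Fin n → F)} {y : Fin n → F} :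
    y ∈ dualSet C ↔ ∀ x ∈ C, x ⬝ᵥ y = 0 := Iff.rfl

/-- Every linear functional on `Fin n → F` is a dot product. -/
lemma exists_dot_rep (f : Module.Dual F (Fin n → F)) :
    ∃ y : Fin n → F, ∀ x, f x = x ⬝ᵥ y := by
  refine ⟨fun i => f (fun j => if i = j then 1 else 0), fun x => ?_⟩
  conv_lhs => rw [pi_eq_sum_univ x]
  rw [map_sum]
  simp [dotProduct, mul_comm]

/-- For a self-dual code, `2 · dim C = n`. -/
lemma selfdual_rank (C : Submodule F (Fin n → F)) (hC : (C : Set (Fin n → F)) = dualSet C) :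
    finrank F C + finrank F C = n := by
  classical
  -- the map sending y to the functional (x ↦ x ⬝ᵥ y) restricted to C
  let Ψ : (Fin n → F) →ₗ[F] Module.Dual F ↥C :=
    { toFun := fun y => ((dotB F n).flip y).comp C.subtype
      map_add' := by intro a b; ext x; simp
      map_smul' := by intro c a; ext x; simp }
  have hΨ : ∀ (y : Fin n → F) (x : ↥C), Ψ y x = (x : Fin n → F) ⬝ᵥ y := fun y x => rfl
  have hker : LinearMap.ker Ψ = C := by
    ext y
    simp only [LinearMap.mem_ker]
    constructor
    · intro h
      have : y ∈ dualSet C := by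
        intro x hx
        have := congrArg (fun g => g ⟨x, hx⟩) h
        simpa [hΨ] using this
      rw [← hC] at this; exact this
    · intro hy
      have hy' : y ∈ dualSet C := by rw [← hC]; exact hy
      ext x
      simpa [hΨ] using hy' x x.2
  have hrange : LinearMap.range Ψ = ⊤ := by
    rw [eq_top_iff]
    rintro f -
    obtain ⟨g, hg⟩ := LinearMap.exists_extend f
    obtain ⟨y, hy⟩ := exists_dot_rep g
    refine ⟨y, ?_⟩
    ext x
    rw [hΨ y x, ← hy]
    exact congrArg (fun h => h x) hg
  have := LinearMap.finrank_range_add_finrank_ker Ψ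
  rw [hker, hrange, finrank_top] at this
  rw [Subspace.dual_finrank_eq] at this
  simpa [Module.finrank_pi] using this

/-- Membership in the dual set is determined on a spanning family. -/
lemma mem_dualSet_of_span {k : ℕ} {v : Fin k → (Fin n → F)} {C : Submodule F (Fin n → F)}
    (hspan : span F (Set.range v) = C) {y : Fin n → F} :
    y ∈ dualSet C ↔ ∀ i, v i ⬝ᵥ y = 0 := by
  constructor
  · intro h i
    exact h (v i) (by rw [← hspan]; exact subset_span ⟨i, rfl⟩)
  · intro h x hx
    rw [← hspan] at hx
    induction hx using span_induction with
    | mem z hz => obtain ⟨i, rfl⟩ := hz; exact h i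
    | zero => simp
    | add a b _ _ ha hb => rw [add_dotProduct, ha, hb, add_zero]
    | smul c a _ ha => rw [smul_dotProduct, ha, smul_zero]

/-- Existence of a dual family. -/
lemma exists_dual_family {k : ℕ} (hn : n = k + k) {v : Fin k → (Fin n → F)}
    {C : Submodule F (Fin n → F)} (hC : (C : Set (Fin n → F)) = dualSet C)
    (hfr : finrank F C = k) (hspan : span F (Set.range v) = C) :
    ∃ u : Fin k → (Fin n → F), ∀ i j, v i ⬝ᵥ u j = if i = j then 1 else 0 := by
  classical
  let Φ : (Fin n → F) →ₗ[F] (Fin k → F) := LinearMap.pi (fun i => dotB F n (v i))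
  have hΦ : ∀ (x : Fin n → F) (i : Fin k), Φ x i = v i ⬝ᵥ x := fun x i => rfl
  have hker : LinearMap.ker Φ = C := by
    ext y
    simp only [LinearMap.mem_ker]
    rw [← SetLike.mem_coe (p := C), hC, mem_dualSet_of_span hspan]
    constructor
    · intro h i; have := congrArg (fun g => g i) h; simpa [hΦ] using this
    · intro h; ext i; simpa [hΦ] using h i
  have hsurj : LinearMap.range Φ = ⊤ := by
    apply Submodule.eq_top_of_finrank_eq
    have := LinearMap.finrank_range_add_finrank_ker Φ
    rw [hker, hfr] at this
    simp only [Module.finrank_pi, Fintype.card_fin] at this ⊢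
    omega
  have hmem : ∀ j : Fin k, (Pi.single j 1 : Fin k → F) ∈ LinearMap.range Φ := by
    intro j; rw [hsurj]; trivial
  choose u hu using fun j => hmem j
  refine ⟨u, fun i j => ?_⟩
  have := congrArg (fun g => g i) (hu j)
  simp only [hΦ] at this
  rw [this]
  simp [Pi.single_apply, eq_comm]

lemma charp_two (h2 : (2:F) = 0) : CharP F 2 := by
  have hd : ringChar F ∣ 2 := ringChar.dvd (by exact_mod_cast h2)
  have h1 : ringChar F ≠ 1 := CharP.ringChar_ne_one
  have h0 : ringChar F ≠ 0 := by
    intro h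
    rw [h] at hd
    exact (by norm_num : ¬ (0 ∣ 2)) hd
  have : ringChar F = 2 := by
    rcases (Nat.le_of_dvd (by norm_num) hd).lt_or_eq with h | h
    · omega
    · exact h
  rw [← this]
  exact ringChar.charP F

lemma char2_sq_sum (h2 : (2:F) = 0) (x : Fin n → F) :
    (∑ i, x i) ^ 2 = ∑ i, x i ^ 2 := by
  haveI := charp_two h2
  haveI : ExpChar F 2 := ExpChar.prime Nat.prime_two
  exact sum_pow_char 2 _ _

/-- In characteristic two, the all-ones vector lies in every self-dual code. -/
lemma one_mem_selfdual (h2 : (2:F) = 0) {C : Submodule F (Fin n → F)}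
    (hC : (C : Set (Fin n → F)) = dualSet C) : (1 : Fin n → F) ∈ C := by
  have key : (1 : Fin n → F) ∈ dualSet C := by
    intro x hx
    have hxx : x ⬝ᵥ x = 0 := by
      have hx' : x ∈ dualSet C := by rw [← hC]; exact hx
      exact hx' x hx
    have hsum : (∑ i, x i) ^ 2 = 0 := by
      rw [char2_sq_sum h2 x]
      simpa [dotProduct, pow_two] using hxx
    have : (∑ i, x i) = 0 := by
      exact pow_eq_zero_iff (by norm_num) |>.mp hsum
    simpa [dotProduct] using this
  rw [← SetLike.mem_coe, hC]
  exact key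

/-- A basis of a submodule, as a family in the ambient space, spans it. -/
lemma span_coe_basis {k : ℕ} {C : Submodule F (Fin n → F)} (b : Basis (Fin k) F ↥C) :
    span F (Set.range (fun i => (b i : Fin n → F))) = C := by
  have : (fun i => (b i : Fin n → F)) = C.subtype ∘ b := rfl
  rw [this, Set.range_comp, ← Submodule.map_span, b.span_eq, Submodule.map_subtype_top]

lemma li_coe_basis {k : ℕ} {C : Submodule F (Fin n → F)} (b : Basis (Fin k) F ↥C) :
    LinearIndependent F (fun i => (b i : Fin n → F)) :=
  b.linearIndependent.map' C.subtype (Submodule.ker_subtype C)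

/-- Choose a basis of a self-dual code which, in characteristic two, starts with the
all-ones vector. -/
lemma exists_good_basis {k : ℕ} (hk : 0 < k) (hn : 0 < n)
    (C : Submodule F (Fin n → F)) (hC : (C : Set (Fin n → F)) = dualSet C)
    (hfr : finrank F C = k) :
    ∃ v : Fin k → (Fin n → F), LinearIndependent F v ∧ span F (Set.range v) = C ∧
      ((2:F) = 0 → v ⟨0, hk⟩ = 1) := by
  classical
  by_cases h2 : (2:F) = 0
  · -- char 2 : extend {1} to a basis of C
    have h1C : (1 : Fin n → F) ∈ C := one_mem_selfdual h2 hC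
    set x : ↥C := ⟨1, h1C⟩ with hxdef
    have hx0 : x ≠ 0 := by
      intro h
      have : (1 : Fin n → F) = 0 := congrArg Subtype.val h
      have := congrArg (fun f => f ⟨0, hn⟩) this
      simpa using this
    have hsli : LinearIndepOn F id ({x} : Set ↥C) :=
      (linearIndepOn_singleton_iff F).mpr hx0
    haveI : FiniteDimensional F ↥C := inferInstance
    let b := Module.Basis.extend hsli
    haveI : Fintype ↑(hsli.extend (Set.subset_univ _)) :=
      FiniteDimensional.fintypeBasisIndex b
    have hcard : Fintype.card (Fin k) = Fintype.card ↑(hsli.extend (Set.subset_univ _)) := by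
      rw [Fintype.card_fin, ← hfr, Module.finrank_eq_card_basis b]
    have hxmem : x ∈ hsli.extend (Set.subset_univ _) :=
      hsli.subset_extend _ rfl
    let e0 : Fin k ≃ ↑(hsli.extend (Set.subset_univ _)) := Fintype.equivOfCardEq hcard
    let e : Fin k ≃ ↑(hsli.extend (Set.subset_univ _)) :=
      e0.trans (Equiv.swap (e0 ⟨0, hk⟩) ⟨x, hxmem⟩)
    have he : e ⟨0, hk⟩ = ⟨x, hxmem⟩ := by
      simp [e, Equiv.swap_apply_left]
    let b' : Basis (Fin k) F ↥C := b.reindex e.symm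
    refine ⟨fun i => (b' i : Fin n → F), li_coe_basis b', span_coe_basis b', fun _ => ?_⟩
    have hb' : b' ⟨0, hk⟩ = x := by
      rw [show b' ⟨0, hk⟩ = b (e ⟨0, hk⟩) by simp [b'], he]
      exact Module.Basis.extend_apply_self hsli ⟨x, hxmem⟩
    show ((b' ⟨0, hk⟩ : ↥C) : Fin n → F) = 1
    rw [hb']
  · -- char ≠ 2 : any basis works
    have : Nonempty (Basis (Fin k) F ↥C) := ⟨(Module.finBasis F ↥C).reindex (by rw [hfr])⟩
    obtain ⟨b⟩ := this
    exact ⟨fun i => (b i : Fin n → F), li_coe_basis b, span_coe_basis b, fun h => absurd h h2⟩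

/-- Core construction: an adapted pair of families for a self-dual code. -/
lemma exists_adapted {k : ℕ} (hk : 0 < k) (hn : n = k + k)
    (C : Submodule F (Fin n → F)) (hC : (C : Set (Fin n → F)) = dualSet C)
    (hfr : finrank F C = k) :
    ∃ v w : Fin k → (Fin n → F),
      span F (Set.range v) = C ∧
      LinearIndependent F (Sum.elim v w) ∧
      (∀ i j, v i ⬝ᵥ v j = 0) ∧
      (∀ i j, v i ⬝ᵥ w j = if i = j then 1 else 0) ∧
      (∀ i j, w i ⬝ᵥ v j = if i = j then 1 else 0) ∧
      (∀ i j, w i ⬝ᵥ w j = if i = ⟨0, hk⟩ ∧ j = ⟨0, hk⟩ then (1:F) else 0) := by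
  classical
  have hn0 : 0 < n := by omega
  obtain ⟨v, hvli, hspan, hv1⟩ := exists_good_basis hk hn0 C hC hfr
  obtain ⟨u, hvu⟩ := exists_dual_family hn hC hfr hspan
  have hvmem : ∀ i, v i ∈ C := fun i => by
    rw [← hspan]; exact subset_span ⟨i, rfl⟩
  have hvv : ∀ i j, v i ⬝ᵥ v j = 0 := by
    intro i j
    have : v j ∈ dualSet C := by rw [← hC]; exact hvmem j
    exact this (v i) (hvmem i)
  -- helper: dot products with sums
  have dot_sum : ∀ (z : Fin n → F) (f : Fin k → Fin n → F) (co : Fin k → F),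
      z ⬝ᵥ (∑ a, co a • f a) = ∑ a, co a * (z ⬝ᵥ f a) := by
    intro z f co
    rw [show z ⬝ᵥ (∑ a, co a • f a) = dotB F n z (∑ a, co a • f a) from rfl, map_sum]
    simp
  have sum_dot : ∀ (z : Fin n → F) (f : Fin k → Fin n → F) (co : Fin k → F),
      (∑ a, co a • f a) ⬝ᵥ z = ∑ a, co a * (f a ⬝ᵥ z) := by
    intro z f co
    rw [show (∑ a, co a • f a) ⬝ᵥ z = (dotB F n).flip z (∑ a, co a • f a) from rfl, map_sum]
    simp
  set i0 : Fin k := ⟨0, hk⟩ with hi0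
  set D : Fin k → Fin k → F := fun i j => if i = i0 ∧ j = i0 then 1 else 0 with hD
  set N : Fin k → Fin k → F := fun i j => u i ⬝ᵥ u j - D i j with hN
  have hNsymm : ∀ i j, N i j = N j i := by
    intro i j
    simp only [hN, hD]
    rw [dotProduct_comm]
    by_cases hi : i = i0 <;> by_cases hj : j = i0 <;> simp [hi, hj]
  have hNdiag : (2:F) = 0 → ∀ i, N i i = 0 := by
    intro h2 i
    have huu : u i ⬝ᵥ u i = (∑ j, u i j) ^ 2 := by
      rw [char2_sq_sum h2]
      simp [dotProduct, pow_two]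
    have hsum : (∑ j, u i j) = v i0 ⬝ᵥ u i := by
      rw [hv1 h2]
      simp [dotProduct]
    have hdd : u i ⬝ᵥ u i = D i i := by
      rw [huu, hsum, hvu i0 i]
      by_cases h : i = i0 <;> simp [hD, h, eq_comm]
    simp [hN, hdd]
  set c : Fin k → Fin k → F := fun i j =>
    if j < i then N i j else if i = j then N i i / 2 else 0 with hc_def
  have hcadd : ∀ i j, c i j + c j i = N i j := by
    intro i j
    rcases lt_trichotomy i j with h | h | h
    · have h1 : c i j = 0 := by simp [hc_def, (asymm h : ¬ j < i), h.ne]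
      have h2 : c j i = N j i := by simp [hc_def, h]
      rw [h1, h2, zero_add, hNsymm j i]
    · subst h
      by_cases h2 : (2:F) = 0
      · have h0 : c i i = 0 := by simp [hc_def, hNdiag h2 i]
        rw [h0, add_zero, hNdiag h2 i]
      · have hci : c i i = N i i / 2 := by simp [hc_def]
        rw [hci, ← add_div, ← two_mul, mul_div_cancel_left₀ _ h2]
    · have h1 : c i j = N i j := by simp [hc_def, h]
      have h2 : c j i = 0 := by simp [hc_def, (asymm h : ¬ i < j), h.ne]
      rw [h1, h2, add_zero]
  set w : Fin k → (Fin n → F) := fun j => u j - ∑ a, c j a • v a with hw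
  have huv : ∀ i j, u i ⬝ᵥ v j = if j = i then 1 else 0 := by
    intro i j; rw [dotProduct_comm]; exact hvu j i
  have hvw : ∀ i j, v i ⬝ᵥ w j = if i = j then 1 else 0 := by
    intro i j
    rw [hw]
    simp only [dotProduct_sub, dot_sum]
    simp [hvv, hvu i j]
  have hwv : ∀ i j, w i ⬝ᵥ v j = if i = j then 1 else 0 := by
    intro i j
    rw [hw]
    simp only [sub_dotProduct, sum_dot]
    simp [hvv, huv i j, eq_comm]
  have hww : ∀ i j, w i ⬝ᵥ w j = D i j := by
    intro i j
    have h1 : u i ⬝ᵥ (∑ a, c j a • v a) = c j i := by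
      rw [dot_sum]
      simp [huv i]
    have h2 : (∑ a, c i a • v a) ⬝ᵥ u j = c i j := by
      rw [sum_dot]
      simp [hvu]
    have h3 : (∑ a, c i a • v a) ⬝ᵥ (∑ a, c j a • v a) = 0 := by
      rw [sum_dot]
      apply Finset.sum_eq_zero
      intro a _
      rw [dot_sum]
      simp [hvv]
    have hc' : c i j + c j i = u i ⬝ᵥ u j - D i j := by
      simpa [hN] using hcadd i j
    rw [hw]
    simp only [dotProduct_sub, sub_dotProduct, h1, h2, h3]
    linear_combination -hc'
  have hli : LinearIndependent F (Sum.elim v w) := by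
    rw [Fintype.linearIndependent_iff]
    intro g hg
    rw [Fintype.sum_sum_type] at hg
    simp only [Sum.elim_inl, Sum.elim_inr] at hg
    have hr : ∀ j, g (Sum.inr j) = 0 := by
      intro j
      have h0 := congrArg (fun z => v j ⬝ᵥ z) hg
      simp only [dotProduct_add, dot_sum, dotProduct_zero] at h0
      simpa [hvv, hvw] using h0
    have hl : ∀ j, g (Sum.inl j) = 0 := by
      intro j
      have h0 := congrArg (fun z => w j ⬝ᵥ z) hg
      simp only [dotProduct_add, dot_sum, dotProduct_zero] at h0
      have h1 : ∑ i, g (Sum.inr i) * (w j ⬝ᵥ w i) = 0 := by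
        apply Finset.sum_eq_zero
        intro a _
        rw [hr a, zero_mul]
      rw [h1] at h0
      simpa [hwv, eq_comm] using h0
    intro s
    cases s with
    | inl j => exact hl j
    | inr j => exact hr j
  exact ⟨v, w, hspan, hli, hvv, hvw, hwv, hww⟩

end Aux

/-- The orthogonal group acts transitively on self-dual codes. -/
theorem orthogonal_transitive_on_selfDual {n : ℕ} {F : Type*} [Field F] [Fintype F]
    (C Chat : Submodule F (Fin n → F))
    (hC : (C : Set (Fin n → F)) = dualSet C)
    (hChat : (Chat : Set (Fin n → F)) = dualSet Chat) :
    ∃ A : Matrix (Fin n) (Fin n) F, A * Aᵀ = 1 ∧ C.map A.vecMulLinear = Chat := by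
  classical
  by_cases hn0 : n = 0
  · subst hn0
    refine ⟨1, by simp, ?_⟩
    apply Submodule.ext
    intro x
    rw [show x = 0 from funext fun i => i.elim0]
    exact iff_of_true (Submodule.zero_mem _) (Submodule.zero_mem _)
  · have key := selfdual_rank C hC
    have key' := selfdual_rank Chat hChat
    set k := Module.finrank F C with hkdef
    have hfr : Module.finrank F C = k := rfl
    have hfr' : Module.finrank F Chat = k := by omega
    have hn : n = k + k := by omega
    have hk : 0 < k := by omega
    obtain ⟨v, w, hspan, hli, hvv, hvw, hwv, hww⟩ := exists_adapted hk hn C hC hfr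
    obtain ⟨v', w', hspan', hli', hvv', hvw', hwv', hww'⟩ :=
      exists_adapted hk hn Chat hChat hfr'
    haveI : Nonempty (Fin k ⊕ Fin k) := ⟨Sum.inl ⟨0, hk⟩⟩
    have hcard : Fintype.card (Fin k ⊕ Fin k) = Module.finrank F (Fin n → F) := by
      simp [Module.finrank_pi, hn]
    let bb := basisOfLinearIndependentOfCardEqFinrank hli hcard
    let bb' := basisOfLinearIndependentOfCardEqFinrank hli' hcard
    have hbb : ∀ s, bb s = Sum.elim v w s := fun s =>
      congrFun (coe_basisOfLinearIndependentOfCardEqFinrank hli hcard) s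
    have hbb' : ∀ s, bb' s = Sum.elim v' w' s := fun s =>
      congrFun (coe_basisOfLinearIndependentOfCardEqFinrank hli' hcard) s
    let T : (Fin n → F) ≃ₗ[F] (Fin n → F) := bb.equiv bb' (Equiv.refl _)
    have hT : ∀ s, T (Sum.elim v w s) = Sum.elim v' w' s := by
      intro s
      rw [← hbb s, ← hbb' s]
      simpa [T] using bb.equiv_apply s bb' (Equiv.refl _)
    have hgram : ∀ s t, (Sum.elim v' w' s) ⬝ᵥ (Sum.elim v' w' t)
        = (Sum.elim v w s) ⬝ᵥ (Sum.elim v w t) := by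
      intro s t
      cases s <;> cases t <;> simp [hvv, hvw, hwv, hww, hvv', hvw', hwv', hww']
    have hbil : (dotB F n).compl₁₂ (T : (Fin n → F) →ₗ[F] (Fin n → F))
        (T : (Fin n → F) →ₗ[F] (Fin n → F)) = dotB F n := by
      apply bb.ext
      intro s
      apply bb.ext
      intro t
      simp only [LinearMap.compl₁₂_apply, dotB_apply, LinearEquiv.coe_coe]
      rw [hbb s, hbb t, hT s, hT t]
      exact hgram s t
    have hpres : ∀ x y : Fin n → F, (T x) ⬝ᵥ (T y) = x ⬝ᵥ y := by
      intro x y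
      have h1 := LinearMap.congr_fun hbil x
      have h2 := LinearMap.congr_fun h1 y
      simpa [LinearMap.compl₁₂_apply] using h2
    let A : Matrix (Fin n) (Fin n) F :=
      Matrix.of fun i j => T (fun l => if i = l then (1:F) else 0) j
    have hA : ∀ x j, A.vecMulLinear x j = T x j := by
      intro x j
      rw [Matrix.vecMulLinear_apply]
      have hx : T x = ∑ i, x i • T (fun l => if i = l then (1:F) else 0) := by
        conv_lhs => rw [pi_eq_sum_univ x]
        rw [map_sum]
        refine Finset.sum_congr rfl fun i _ => ?_
        exact T.map_smul (x i) _
      rw [hx]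
      simp [Matrix.vecMul, dotProduct, A, Finset.sum_apply]
    have hA1 : A * Aᵀ = 1 := by
      ext i j
      have h1 : (A * Aᵀ) i j = (T (fun l => if i = l then (1:F) else 0)) ⬝ᵥ
          (T (fun l => if j = l then (1:F) else 0)) := by
        simp [Matrix.mul_apply, Matrix.transpose_apply, dotProduct, A]
      rw [h1, hpres]
      simp [dotProduct, Matrix.one_apply, mul_ite, Finset.sum_ite_eq, eq_comm]
    have hAT : A.vecMulLinear = (T : (Fin n → F) →ₗ[F] (Fin n → F)) := by
      apply LinearMap.ext
      intro x
      funext j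
      rw [hA x j]
      rfl
    refine ⟨A, hA1, ?_⟩
    rw [hAT, ← hspan, ← hspan', Submodule.map_span]
    congr 1
    rw [← Set.range_comp]
    exact congrArg Set.range (funext fun i => hT (Sum.inl i))
end

section
/- If q ≡ 3 (mod 4) and C ⊆ F_q^n is a self-dual linear code, then n is divisible by 4. -/
open Matrix BigOperators

/-!
A self-dual code `C ⊆ F^n` has dimension `k = n / 2`. In a basis of `F^n` whose first `k` vectors
span `C`, the Gram matrix of the dot product is `Pᵀ P` for an invertible `P`, so its determinant is
a nonzero square; on the other hand it has block form `[[0, A], [Aᵀ, D]]`, with determinant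
`(-1)^k (det A)^2`. Hence `(-1)^k` is a square in `F`, which forces `k` to be even because `-1` is
not a square when `q ≡ 3 (mod 4)`.
-/

open Module

theorem Matrix.det_fromBlocks_zero₁₁ {R ι : Type*} [CommRing R] [Fintype ι] [DecidableEq ι]
    (B C D : Matrix ι ι R) :
    (fromBlocks 0 B C D).det = (-1) ^ Fintype.card ι * B.det * C.det := by
  have h : fromBlocks 0 B C D = fromBlocks B 0 (D - C) C * fromBlocks 0 1 1 1 := by
    simp [fromBlocks_multiply]
  rw [h, det_mul, det_fromBlocks_zero₁₂, det_fromBlocks_one₂₂, zero_sub, mul_one, det_neg, det_one]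
  ring

theorem Module.Basis.det_dotProduct_eq_sq {R ι m : Type*} [CommRing R] [Fintype ι] [DecidableEq ι]
    [Fintype m] (b : Basis ι R (m → R)) (σ : m ≃ ι) :
    (of fun i j => b i ⬝ᵥ b j).det = ((Pi.basisFun R m).reindex σ).det b ^ 2 := by
  set P := ((Pi.basisFun R m).reindex σ).toMatrix b
  have h : (of fun i j => b i ⬝ᵥ b j) = Pᵀ * P := by
    ext i j
    simp only [of_apply, mul_apply, transpose_apply, P, Basis.toMatrix_apply,
      Basis.repr_reindex_apply, Pi.basisFun_repr, dotProduct]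
    exact (σ.symm.sum_comp fun x => b i x * b j x).symm
  rw [h, det_mul, det_transpose, Basis.det_apply, sq]

def dualCode {n : ℕ} {F : Type*} [Field F] (C : Submodule F (Fin n → F)) :
    Submodule F (Fin n → F) :=
  C.dualAnnihilator.comap (dotProductEquiv F (Fin n)).toLinearMap

theorem coe_dualCode {n : ℕ} {F : Type*} [Field F] (C : Submodule F (Fin n → F)) :
    (dualCode C : Set (Fin n → F)) = dualSet C := by
  ext y
  simp [dualCode, dualSet, Submodule.mem_dualAnnihilator, dotProduct_comm y]

theorem finrank_add_finrank_dualCode {n : ℕ} {F : Type*} [Field F] (C : Submodule F (Fin n → F)) :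
    finrank F C + finrank F (dualCode C) = n := by
  rw [dualCode, ((dotProductEquiv F (Fin n)).ofSubmodule' _).finrank_eq,
    Subspace.finrank_add_finrank_dualAnnihilator_eq, finrank_fin_fun]

theorem Submodule.exists_basis_sum_inl_mem {K V : Type*} [Field K] [AddCommGroup V] [Module K V]
    [FiniteDimensional K V] (W : Submodule K V) {k m : ℕ} (hW : finrank K W = k)
    (hV : finrank K V = k + m) : ∃ b : Basis (Fin k ⊕ Fin m) K V, ∀ i, b (Sum.inl i) ∈ W := by
  obtain ⟨W', hW'⟩ := W.exists_isCompl
  have hm : finrank K W' = m := by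
    have := Submodule.finrank_add_eq_of_isCompl hW'
    omega
  refine ⟨((finBasisOfFinrankEq K W hW).prod (finBasisOfFinrankEq K W' hm)).map
    (Submodule.prodEquivOfIsCompl W W' hW'), fun i => ?_⟩
  simp [Basis.prod_apply, Submodule.coe_prodEquivOfIsCompl']

theorem isSquare_neg_one_pow_of_isotropic {F m : Type*} [Field F] [Fintype m] {k : ℕ}
    (b : Basis (Fin k ⊕ Fin k) F (m → F)) (hb : ∀ i j, b (Sum.inl i) ⬝ᵥ b (Sum.inl j) = 0) :
    IsSquare ((-1 : F) ^ k) := by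
  set G : Matrix (Fin k ⊕ Fin k) (Fin k ⊕ Fin k) F := of fun i j => b i ⬝ᵥ b j
  have hG : G = fromBlocks 0 G.toBlocks₁₂ G.toBlocks₁₂ᵀ G.toBlocks₂₂ := by
    conv_lhs => rw [← fromBlocks_toBlocks G]
    congr 1
    · ext i j; exact hb i j
    · ext i j; exact dotProduct_comm _ _
  have hdetG : G.det = (-1) ^ k * G.toBlocks₁₂.det ^ 2 := by
    have h := det_fromBlocks_zero₁₁ G.toBlocks₁₂ G.toBlocks₁₂ᵀ G.toBlocks₂₂
    rw [← hG, det_transpose, Fintype.card_fin] at h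
    rw [h]
    ring
  set u := ((Pi.basisFun F m).reindex (b.indexEquiv (Pi.basisFun F m)).symm).det b
  have hu : u ≠ 0 := (Basis.isUnit_det _ b).ne_zero
  have hGu : G.det = u ^ 2 := b.det_dotProduct_eq_sq _
  have hA : G.toBlocks₁₂.det ≠ 0 := by
    rintro hA
    apply hu
    simpa [hA] using hGu.symm.trans hdetG
  exact ⟨u / G.toBlocks₁₂.det, by field_simp; rw [← hGu, hdetG]⟩

theorem FiniteField.even_of_isSquare_neg_one_pow {F : Type*} [Field F] [Fintype F]
    (hF : Fintype.card F % 4 = 3) {k : ℕ} (h : IsSquare ((-1 : F) ^ k)) : Even k := by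
  by_contra hk
  rw [Nat.not_even_iff_odd.mp hk |>.neg_one_pow] at h
  exact FiniteField.isSquare_neg_one_iff.mp h hF

/-- If `q ≡ 3 (mod 4)` and a self-dual code of length `n` exists over `F_q`,
then `4 ∣ n`. -/
theorem four_dvd_length_of_selfDual {n : ℕ} {F : Type*} [Field F] [Fintype F]
    (hq : Fintype.card F % 4 = 3) (C : Submodule F (Fin n → F))
    (hC : (C : Set (Fin n → F)) = dualSet C) :
    4 ∣ n := by
  have hdual : dualCode C = C := SetLike.coe_injective (by rw [coe_dualCode, hC])
  have hn : finrank F C + finrank F C = n := by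
    have h := finrank_add_finrank_dualCode C
    rwa [hdual] at h
  obtain ⟨b, hb⟩ := C.exists_basis_sum_inl_mem rfl (by rw [finrank_fin_fun, hn])
  have hiso : ∀ i j, b (Sum.inl i) ⬝ᵥ b (Sum.inl j) = 0 := fun i j =>
    (hC ▸ hb j : b (Sum.inl j) ∈ dualSet C) _ (hb i)
  obtain ⟨m, hm⟩ := FiniteField.even_of_isSquare_neg_one_pow hq
    (isSquare_neg_one_pow_of_isotropic b hiso)
  exact ⟨m, by omega⟩
end

section
/- Let G and Ĝ be k×n generator matrices of self-dual codes C and Ĉ with G = [I_k | M]P and Ĝ = [I_k | M̂]P̂ for permutation matrices P, P̂ and matrices M, M̂ with MMᵀ = M̂M̂ᵀ = −I_k. Then A = P⁻¹ · diag(I_k, −Mᵀ M̂) · P̂ satisfies AAᵀ = I_n and GA = Ĝ. -/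
/-!
`A` is a product of three orthogonal matrices: `P⁻¹ = Pᵀ`, `P̂`, and `diag(I, -Mᵀ M̂)`, the last
because `Mᵀ M̂ M̂ᵀ M = -Mᵀ M = I`. Since `P P⁻¹ = I`, `[I | M] P A = [I | M] diag(I, -Mᵀ M̂) P̂`,
and `-M Mᵀ M̂ = M̂` turns this into `[I | M̂] P̂`.
-/

open Matrix

-- `Matrix.orthogonalGroup` is the unitary group for this trivial star.
attribute [local instance] starRingOfComm

namespace Matrix

variable {n m R : Type*} [Fintype n] [DecidableEq n] [Fintype m] [DecidableEq m] [CommRing R]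

lemma inv_permMatrix (σ : Equiv.Perm n) : (σ.permMatrix R)⁻¹ = (σ⁻¹).permMatrix R :=
  inv_eq_right_inv (by rw [← permMatrix_mul, inv_mul_cancel, permMatrix_one])

lemma permMatrix_mem_orthogonalGroup (σ : Equiv.Perm n) :
    σ.permMatrix R ∈ orthogonalGroup n R := by
  rw [mem_orthogonalGroup_iff, transpose_permMatrix, ← permMatrix_mul,
    inv_mul_cancel, permMatrix_one]

lemma neg_mem_orthogonalGroup {A : Matrix n n R} (hA : A ∈ orthogonalGroup n R) :
    -A ∈ orthogonalGroup n R := by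
  rw [mem_orthogonalGroup_iff] at hA ⊢
  rwa [transpose_neg, neg_mul_neg]

lemma fromBlocks_one_mem_orthogonalGroup {A : Matrix m m R} (hA : A ∈ orthogonalGroup m R) :
    fromBlocks (1 : Matrix n n R) 0 0 A ∈ orthogonalGroup (n ⊕ m) R := by
  rw [mem_orthogonalGroup_iff] at hA ⊢
  simp [fromBlocks_transpose, fromBlocks_multiply, hA]

lemma transpose_mul_self_eq_neg_one {M : Matrix n n R} (hM : M * Mᵀ = -1) : Mᵀ * M = -1 := by
  have h : (-Mᵀ) * M = 1 := mul_eq_one_comm.mp (by rw [mul_neg, hM, neg_neg])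
  rwa [neg_mul, neg_eq_iff_eq_neg] at h

lemma transpose_mul_mem_orthogonalGroup {M Mhat : Matrix n n R}
    (hM : M * Mᵀ = -1) (hMhat : Mhat * Mhatᵀ = -1) :
    Mᵀ * Mhat ∈ orthogonalGroup n R := by
  rw [mem_orthogonalGroup_iff]
  calc Mᵀ * Mhat * (Mᵀ * Mhat)ᵀ = Mᵀ * (Mhat * Mhatᵀ) * M := by
        simp only [transpose_mul, transpose_transpose, Matrix.mul_assoc]
    _ = 1 := by rw [hMhat, mul_neg, mul_one, neg_mul, transpose_mul_self_eq_neg_one hM, neg_neg]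

lemma fromCols_one_mul_fromBlocks_neg_transpose_mul {M Mhat : Matrix n n R}
    (hM : M * Mᵀ = -1) :
    fromCols (1 : Matrix n n R) M * fromBlocks (1 : Matrix n n R) 0 0 (-(Mᵀ * Mhat)) = fromCols 1 Mhat := by
  rw [fromCols_mul_fromBlocks, mul_neg, ← Matrix.mul_assoc, hM]
  simp

end Matrix

theorem orthogonal_map_between_systematic_selfDual_general {k : ℕ} {F : Type*} [Field F]
    (M Mhat : Matrix (Fin k) (Fin k) F)
    (hM : M * Mᵀ = -1) (hMhat : Mhat * Mhatᵀ = -1)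
    (σ σhat : Equiv.Perm (Fin k ⊕ Fin k)) :
    let P : Matrix (Fin k ⊕ Fin k) (Fin k ⊕ Fin k) F := σ.permMatrix F
    let Phat : Matrix (Fin k ⊕ Fin k) (Fin k ⊕ Fin k) F := σhat.permMatrix F
    let A : Matrix (Fin k ⊕ Fin k) (Fin k ⊕ Fin k) F :=
      P⁻¹ * Matrix.fromBlocks (1 : Matrix (Fin k) (Fin k) F) 0 0 (-(Mᵀ * Mhat)) * Phat
    A * Aᵀ = 1 ∧
      Matrix.fromCols (1 : Matrix (Fin k) (Fin k) F) M * P * A =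
        Matrix.fromCols (1 : Matrix (Fin k) (Fin k) F) Mhat * Phat := by
  intro P Phat A
  have hPinv : P⁻¹ = (σ⁻¹).permMatrix F := inv_permMatrix σ
  constructor
  · rw [← mem_orthogonalGroup_iff]
    refine Submonoid.mul_mem _ (Submonoid.mul_mem _ ?_ ?_) (permMatrix_mem_orthogonalGroup σhat)
    · rw [hPinv]
      exact permMatrix_mem_orthogonalGroup σ⁻¹
    · exact fromBlocks_one_mem_orthogonalGroup
        (neg_mem_orthogonalGroup (transpose_mul_mem_orthogonalGroup hM hMhat))
  · have hPPinv : P * P⁻¹ = 1 := by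
      rw [hPinv, ← permMatrix_mul, inv_mul_cancel, permMatrix_one]
    simp only [A, ← Matrix.mul_assoc]
    rw [Matrix.mul_assoc _ P, hPPinv, Matrix.mul_one,
      fromCols_one_mul_fromBlocks_neg_transpose_mul hM]

/-- If `G = [I_k | M] P` and `Ĝ = [I_k | M̂] P̂` generate self-dual codes
(`MMᵀ = M̂M̂ᵀ = -I_k`), then `A = P⁻¹ · diag(I_k, -Mᵀ M̂) · P̂` is orthogonal and
maps `G` to `Ĝ`. -/
theorem orthogonal_map_between_systematic_selfDual {k : ℕ} {F : Type*} [Field F] [Fintype F]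
    (M Mhat : Matrix (Fin k) (Fin k) F)
    (hM : M * Mᵀ = -1) (hMhat : Mhat * Mhatᵀ = -1)
    (σ σhat : Equiv.Perm (Fin k ⊕ Fin k)) :
    let P : Matrix (Fin k ⊕ Fin k) (Fin k ⊕ Fin k) F := σ.permMatrix F
    let Phat : Matrix (Fin k ⊕ Fin k) (Fin k ⊕ Fin k) F := σhat.permMatrix F
    let A : Matrix (Fin k ⊕ Fin k) (Fin k ⊕ Fin k) F :=
      P⁻¹ * Matrix.fromBlocks (1 : Matrix (Fin k) (Fin k) F) 0 0 (-(Mᵀ * Mhat)) * Phat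
    A * Aᵀ = 1 ∧
      Matrix.fromCols (1 : Matrix (Fin k) (Fin k) F) M * P * A =
        Matrix.fromCols (1 : Matrix (Fin k) (Fin k) F) Mhat * Phat :=
  orthogonal_map_between_systematic_selfDual_general M Mhat hM hMhat σ σhat
end

section
/- Let C ⊆ F_q^{l×m} be a linear matrix code with minimum rank distance d ≥ 1 and dimension k (as an F_q-vector space). Then k ≤ min(l,m)·(max(l,m) − d + 1). Consequently, if l ≤ m and k = lm/2, then d ≤ l/2 + 1. -/
open Matrix Module Finset

/-! A matrix supported on `e` rows has rank at most `e`, so if every nonzero codeword has rank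
`> e`, deleting any `e` rows (or, after transposing, columns) is injective on the code. With
`e = d - 1` this gives `dim C ≤ (l - d + 1) m` and `dim C ≤ l (m - d + 1)`. If `dim C = lm/2`, the
first bound reads `l ≤ 2 (l - d + 1)`. -/

namespace Matrix

variable {m n F : Type*} [Field F] [Fintype m] [Fintype n]

theorem rank_le_card_of_row_eq_zero {A : Matrix m n F} (s : Finset m)
    (hA : ∀ i ∉ s, A i = 0) : A.rank ≤ #s := by
  have hspan : Submodule.span F (Set.range A.row) ≤
      Submodule.span F (Set.range fun i : s => A i) := by
    refine Submodule.span_le.2 ?_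
    rintro _ ⟨i, rfl⟩
    by_cases hi : i ∈ s
    · exact Submodule.subset_span ⟨⟨i, hi⟩, rfl⟩
    · simp [row, hA i hi]
  calc A.rank = finrank F (Submodule.span F (Set.range A.row)) := A.rank_eq_finrank_span_row
    _ ≤ (Set.range fun i : s => A i).finrank F := Submodule.finrank_mono hspan
    _ ≤ Fintype.card s := finrank_range_le_card _
    _ = #s := Fintype.card_coe s

theorem finrank_le_card_sub_mul_card_of_lt_rank (C : Submodule F (Matrix m n F)) {e : ℕ}
    (hC : ∀ X ∈ C, X ≠ 0 → e < X.rank) :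
    finrank F C ≤ (Fintype.card m - e) * Fintype.card n := by
  classical
  obtain ⟨s, -, hs⟩ := exists_subset_card_eq (min_le_right e #(univ : Finset m))
  let deleteRows : Matrix m n F →ₗ[F] Matrix (↥sᶜ) n F := LinearMap.funLeft F (n → F) Subtype.val
  have hinj : Function.Injective (deleteRows ∘ₗ C.subtype) := by
    rw [← LinearMap.ker_eq_bot, LinearMap.ker_eq_bot']
    intro X hX
    by_contra hX0
    have hle : X.1.rank ≤ #s :=
      rank_le_card_of_row_eq_zero s fun i hi => congrFun hX ⟨i, mem_compl.2 hi⟩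
    have hlt := hC X X.2 (by simpa using hX0)
    omega
  calc finrank F C ≤ finrank F (Matrix (↥sᶜ) n F) :=
        LinearMap.finrank_le_finrank_of_injective hinj
    _ = (Fintype.card m - e) * Fintype.card n := by
      simp only [finrank_matrix, finrank_self, mul_one, Fintype.card_coe, card_compl, hs,
        card_univ]
      congr 1
      omega

theorem finrank_le_card_mul_card_sub_of_lt_rank (C : Submodule F (Matrix m n F)) {e : ℕ}
    (hC : ∀ X ∈ C, X ≠ 0 → e < X.rank) :
    finrank F C ≤ Fintype.card m * (Fintype.card n - e) := by
  let τ := transposeLinearEquiv m n F F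
  have hCτ : ∀ X ∈ C.map (τ : Matrix m n F →ₗ[F] Matrix n m F), X ≠ 0 → e < X.rank :=
    fun X hX hX0 => by
      simpa [τ] using hC _ ((Submodule.mem_map_equiv C).1 hX) (by simpa [τ] using hX0)
  rw [← τ.finrank_map_eq, mul_comm]
  exact finrank_le_card_sub_mul_card_of_lt_rank _ hCτ

end Matrix

theorem singleton_bound_rank_metric_general {l m : ℕ} {F : Type*} [Field F]
    (C : Submodule F (Matrix (Fin l) (Fin m) F)) (d : ℕ) (hd : 1 ≤ d)
    (hmin : ∀ X ∈ C, X ≠ 0 → d ≤ X.rank)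
    (hach : ∃ X ∈ C, X ≠ 0 ∧ X.rank = d) :
    Module.finrank F C ≤ min l m * (max l m - d + 1) ∧
      (l ≤ m → 2 * Module.finrank F C = l * m → d ≤ l / 2 + 1) := by
  have hrank : ∀ X ∈ C, X ≠ 0 → d - 1 < X.rank := fun X hX hX0 => by
    have := hmin X hX hX0
    omega
  have hrow := finrank_le_card_sub_mul_card_of_lt_rank C hrank
  have hcol := finrank_le_card_mul_card_sub_of_lt_rank C hrank
  simp only [Fintype.card_fin] at hrow hcol
  refine ⟨?_, fun hlm hk => ?_⟩
  · rcases le_total l m with h | h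
    · rw [min_eq_left h, max_eq_right h]
      exact hcol.trans (Nat.mul_le_mul_left _ (by omega))
    · rw [min_eq_right h, max_eq_left h, mul_comm]
      exact hrow.trans (Nat.mul_le_mul_right _ (by omega))
  · obtain ⟨X, -, -, hXd⟩ := hach
    have hdl : d ≤ l := hXd ▸ X.rank_le_card_height.trans_eq (Fintype.card_fin l)
    rcases Nat.eq_zero_or_pos m with hm | hm
    · omega
    · have hl : l ≤ 2 * (l - (d - 1)) :=
        Nat.le_of_mul_le_mul_right (by rw [mul_assoc]; omega) hm
      omega

/-- Singleton bound for rank-metric codes: a linear matrix code `C ⊆ F_q^{l×m}`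
with minimum rank distance `d` satisfies `dim C ≤ min(l,m)·(max(l,m) − d + 1)`;
consequently if `l ≤ m` and `dim C = lm/2` then `d ≤ l/2 + 1`. -/
theorem singleton_bound_rank_metric {l m : ℕ} {F : Type*} [Field F] [Fintype F]
    (C : Submodule F (Matrix (Fin l) (Fin m) F)) (d : ℕ) (hd : 1 ≤ d)
    (hmin : ∀ X ∈ C, X ≠ 0 → d ≤ X.rank)
    (hach : ∃ X ∈ C, X ≠ 0 ∧ X.rank = d) :
    Module.finrank F C ≤ min l m * (max l m - d + 1) ∧
      (l ≤ m → 2 * Module.finrank F C = l * m → d ≤ l / 2 + 1) :=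
  singleton_bound_rank_metric_general C d hd hmin hach
end
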